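/- Let t and s be positive integers and let k_1 ≥ k_2 ≥ ... ≥ k_t be positive integers such that t! · k_t ≥ t^t · s. Then for all nonnegative integers m_1, ..., m_t, one has k_1·m_1^t + k_2·m_2^t + ... + k_t·m_t^t ≥ s·( C(m_1 + ... + m_t, t) + C(m_1 + ... + m_{t-1}, t-1) + ... + C(m_1 + m_2, 2) + C(m_1, 1) ). -/
import Mathlib

/-- Nat version of Jensen for power sums: `(∑ f)^(n+1) ≤ #s^n * ∑ f^(n+1)`. -/
lemma nat_pow_sum_le_card_mul_sum_pow (s : Finset ℕ) (f : ℕ → ℕ) (n : ℕ) :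
    (∑ i ∈ s, f i) ^ (n + 1) ≤ s.card ^ n * ∑ i ∈ s, f i ^ (n + 1) := by
  have h := pow_sum_le_card_mul_sum_pow (s := s) (f := fun i => (f i : ℚ))
    (fun i _ => by positivity) n
  have := h
  exact_mod_cast this

lemma factorial_le_pow_mul_factorial {j t : ℕ} (h : j ≤ t) :
    Nat.factorial t ≤ Nat.factorial j * t ^ (t - j) := by
  obtain ⟨d, rfl⟩ := Nat.exists_eq_add_of_le h
  clear h
  induction d with
  | zero => simp
  | succ d ih =>
      have h1 : Nat.factorial (j + (d + 1)) = (j + d + 1) * Nat.factorial (j + d) := by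
        rw [show j + (d + 1) = (j + d) + 1 by ring, Nat.factorial_succ]
      rw [h1]
      calc (j + d + 1) * Nat.factorial (j + d)
          ≤ (j + d + 1) * (Nat.factorial j * (j + d) ^ (j + d - j)) :=
            Nat.mul_le_mul_left _ ih
        _ ≤ (j + (d+1)) * (Nat.factorial j * (j + (d+1)) ^ d) := by
            have : (j + d - j) = d := by omega
            rw [this]
            exact Nat.mul_le_mul (by omega)
              (Nat.mul_le_mul_left _ (Nat.pow_le_pow_left (by omega) d))
        _ = Nat.factorial j * (j + (d + 1)) ^ (j + (d + 1) - j) := by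
            have : j + (d + 1) - j = d + 1 := by omega
            rw [this, pow_succ]; ring

/-- Let `t, s` be positive integers and `k_1 ≥ k_2 ≥ ⋯ ≥ k_t`
positive integers with `t! · k_t ≥ t^t · s`. Then for all nonnegative integers
`m_1, …, m_t`,
`k_1·m_1^t + ⋯ + k_t·m_t^t ≥ s·Σ_{j=1}^{t} C(m_1 + ⋯ + m_j, j)`. -/
theorem weighted_power_sum_ge_binomial_sum (t s : ℕ) (ht : 0 < t) (hs : 0 < s)
    (k : ℕ → ℕ) (hkpos : ∀ i ∈ Finset.Icc 1 t, 0 < k i)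
    (hkmono : ∀ i j : ℕ, 1 ≤ i → i ≤ j → j ≤ t → k j ≤ k i)
    (hkt : t ^ t * s ≤ Nat.factorial t * k t) (m : ℕ → ℕ) :
    s * ∑ j ∈ Finset.Icc 1 t, Nat.choose (∑ i ∈ Finset.Icc 1 j, m i) j ≤
      ∑ i ∈ Finset.Icc 1 t, k i * (m i) ^ t := by
  -- Key lemma A: for 1 ≤ j ≤ t,
  -- t! * C(∑_{i≤j} m_i, j) ≤ t^(t-1) * ∑_{i≤j} m_i^t
  have lemA : ∀ j ∈ Finset.Icc 1 t,
      Nat.factorial t * Nat.choose (∑ i ∈ Finset.Icc 1 j, m i) j ≤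
        t ^ (t - 1) * ∑ i ∈ Finset.Icc 1 j, (m i) ^ t := by
    intro j hj
    simp only [Finset.mem_Icc] at hj
    obtain ⟨hj1, hjt⟩ := hj
    set n := ∑ i ∈ Finset.Icc 1 j, m i with hn
    -- j! * C(n,j) ≤ n^j
    have h1 : Nat.factorial j * Nat.choose n j ≤ n ^ j := by
      rw [← Nat.descFactorial_eq_factorial_mul_choose]
      exact Nat.descFactorial_le_pow n j
    -- n^j ≤ j^(j-1) * ∑ m_i^j
    have hcard : (Finset.Icc 1 j).card = j := by simp
    have h2 : n ^ j ≤ j ^ (j - 1) * ∑ i ∈ Finset.Icc 1 j, (m i) ^ j := by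
      have := nat_pow_sum_le_card_mul_sum_pow (Finset.Icc 1 j) m (j - 1)
      rwa [hcard, Nat.sub_add_cancel hj1] at this
    -- ∑ m_i^j ≤ ∑ m_i^t
    have h3 : ∑ i ∈ Finset.Icc 1 j, (m i) ^ j ≤ ∑ i ∈ Finset.Icc 1 j, (m i) ^ t := by
      apply Finset.sum_le_sum
      intro i _
      rcases Nat.eq_zero_or_pos (m i) with h | h
      · rw [h, Nat.zero_pow (by omega), Nat.zero_pow (by omega)]
      · exact Nat.pow_le_pow_right h hjt
    calc Nat.factorial t * Nat.choose n j
        ≤ (Nat.factorial j * t ^ (t - j)) * Nat.choose n j :=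
          Nat.mul_le_mul_right _ (factorial_le_pow_mul_factorial hjt)
      _ = t ^ (t - j) * (Nat.factorial j * Nat.choose n j) := by ring
      _ ≤ t ^ (t - j) * n ^ j := Nat.mul_le_mul_left _ h1
      _ ≤ t ^ (t - j) * (j ^ (j - 1) * ∑ i ∈ Finset.Icc 1 j, (m i) ^ j) :=
          Nat.mul_le_mul_left _ h2
      _ ≤ t ^ (t - j) * (t ^ (j - 1) * ∑ i ∈ Finset.Icc 1 j, (m i) ^ t) :=
          Nat.mul_le_mul_left _ (Nat.mul_le_mul (Nat.pow_le_pow_left hjt _) h3)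
      _ = t ^ (t - j + (j - 1)) * ∑ i ∈ Finset.Icc 1 j, (m i) ^ t := by
          rw [pow_add]; ring
      _ = t ^ (t - 1) * ∑ i ∈ Finset.Icc 1 j, (m i) ^ t := by
          congr 2; omega
  -- Multiply the goal by t!
  have htfac : 0 < Nat.factorial t := Nat.factorial_pos t
  refine Nat.le_of_mul_le_mul_left ?_ htfac
  calc Nat.factorial t *
        (s * ∑ j ∈ Finset.Icc 1 t, Nat.choose (∑ i ∈ Finset.Icc 1 j, m i) j)
      = s * ∑ j ∈ Finset.Icc 1 t,
          Nat.factorial t * Nat.choose (∑ i ∈ Finset.Icc 1 j, m i) j := by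
        rw [Finset.mul_sum, Finset.mul_sum, Finset.mul_sum]
        exact Finset.sum_congr rfl fun x _ => by ring
    _ ≤ s * ∑ j ∈ Finset.Icc 1 t,
          t ^ (t - 1) * ∑ i ∈ Finset.Icc 1 j, (m i) ^ t :=
        Nat.mul_le_mul_left _ (Finset.sum_le_sum lemA)
    _ = s * t ^ (t - 1) * ∑ j ∈ Finset.Icc 1 t, ∑ i ∈ Finset.Icc 1 j, (m i) ^ t := by
        rw [← Finset.mul_sum, ← mul_assoc]
    _ ≤ s * t ^ (t - 1) * ∑ j ∈ Finset.Icc 1 t, ∑ i ∈ Finset.Icc 1 t, (m i) ^ t := by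
        apply Nat.mul_le_mul_left
        apply Finset.sum_le_sum
        intro j hj
        apply Finset.sum_le_sum_of_subset
        apply Finset.Icc_subset_Icc_right
        exact (Finset.mem_Icc.mp hj).2
    _ = s * t ^ (t - 1) * (t * ∑ i ∈ Finset.Icc 1 t, (m i) ^ t) := by
        rw [Finset.sum_const]
        simp [mul_comm]
    _ = (t ^ t * s) * ∑ i ∈ Finset.Icc 1 t, (m i) ^ t := by
        have htt : t ^ (t - 1) * t = t ^ t := by
          rw [← pow_succ, Nat.sub_add_cancel ht]
        rw [← htt]; ring
    _ ≤ (Nat.factorial t * k t) * ∑ i ∈ Finset.Icc 1 t, (m i) ^ t :=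
        Nat.mul_le_mul_right _ hkt
    _ = Nat.factorial t * ∑ i ∈ Finset.Icc 1 t, k t * (m i) ^ t := by
        rw [Finset.mul_sum, Finset.mul_sum]
        exact Finset.sum_congr rfl fun x _ => by ring
    _ ≤ Nat.factorial t * ∑ i ∈ Finset.Icc 1 t, k i * (m i) ^ t := by
        apply Nat.mul_le_mul_left
        apply Finset.sum_le_sum
        intro i hi
        simp only [Finset.mem_Icc] at hi
        exact Nat.mul_le_mul_right _ (hkmono i t hi.1 hi.2 le_rfl)
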